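/- Let n ≥ 3 and 1 ≤ m ≤ n−1 be integers, let i ∈ V = {1,…,n}, and let T > 0. Then the average of the matrix exponentials exp(−T L_{i,N}) over all m-element subsets N of V \ {i}, namely (1/C(n−1,m)) · Σ_{N ⊆ V\{i}, |N|=m} exp(−T L_{i,N}), equals the matrix M_i(T). -/

import Mathlib

open Matrix MeasureTheory ProbabilityTheory

/-- Measurable space structure on matrices (entrywise/pi structure). -/
instance matMS (n : ℕ) : MeasurableSpace (Matrix (Fin n) (Fin n) ℝ) := MeasurableSpace.pi

/-- The discrete measurable space structure on finite sets of nodes. -/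
instance finsetMS (n : ℕ) : MeasurableSpace (Finset (Fin n)) := ⊤

/-- The star Laplacian `L_{i,N}`: the Laplacian of the graph on `Fin n` whose edge set is
`{{i,j} : j ∈ N}`, where `m = |N|`.  Its entries are `(L)_{ii} = m`, `(L)_{jj} = 1` and
`(L)_{ij} = (L)_{ji} = -1` for `j ∈ N`, and `0` otherwise. -/
noncomputable def starLap (n m : ℕ) (i : Fin n) (N : Finset (Fin n)) :
    Matrix (Fin n) (Fin n) ℝ :=
  Matrix.of fun k l =>
    if k = i ∧ l = i then (m : ℝ)
    else if k = i ∧ l ∈ N then -1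
    else if l = i ∧ k ∈ N then -1
    else if k = l ∧ k ∈ N then 1
    else 0

/-- The matrix `M_i(T)`. -/
noncomputable def Mmat (n m : ℕ) (i : Fin n) (T : ℝ) : Matrix (Fin n) (Fin n) ℝ :=
  Matrix.of fun k l =>
    if k = i ∧ l = i then (1 + m * Real.exp (-((m : ℝ) + 1) * T)) / ((m : ℝ) + 1)
    else if k = l then
      1 + (((m : ℝ) ^ 2 - 1) * Real.exp (-T) + Real.exp (-((m : ℝ) + 1) * T) - (m : ℝ) ^ 2) /
        (((m : ℝ) + 1) * ((n : ℝ) - 1))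
    else if k = i ∨ l = i then
      (m : ℝ) * (1 - Real.exp (-((m : ℝ) + 1) * T)) / (((m : ℝ) + 1) * ((n : ℝ) - 1))
    else
      ((m : ℝ) - 1) * ((m : ℝ) + Real.exp (-((m : ℝ) + 1) * T) - ((m : ℝ) + 1) * Real.exp (-T)) /
        (((m : ℝ) + 1) * ((n : ℝ) - 1) * ((n : ℝ) - 2))

/-- A graph Laplacian on `n` nodes: a real symmetric matrix with nonpositive off-diagonal
entries and all row sums equal to zero. -/
def IsGraphLaplacian {n : ℕ} (L : Matrix (Fin n) (Fin n) ℝ) : Prop :=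
  L.IsSymm ∧ (∀ k l, k ≠ l → L k l ≤ 0) ∧ (∀ k, ∑ l, L k l = 0)

/-- The eigenvalues of a real symmetric matrix sorted in nondecreasing order (`0`-indexed):
`sortedEig A (k-1)` is `λ_k(A)` in the notation `λ_1(A) ≤ ⋯ ≤ λ_n(A)`. -/
noncomputable def sortedEig {n : ℕ} (A : Matrix (Fin n) (Fin n) ℝ) (k : ℕ) : ℝ :=
  if hA : A.IsHermitian then ((Finset.univ.val.map hA.eigenvalues).sort (· ≤ ·)).getD k 0
  else 0

/-- The orthogonal projection `Π = I - (1/n) J` of `ℝⁿ` onto the hyperplane orthogonal to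
the all-ones vector. -/
noncomputable def projMat (n : ℕ) : Matrix (Fin n) (Fin n) ℝ :=
  1 - (n : ℝ)⁻¹ • Matrix.of (fun _ _ => (1 : ℝ))

/-- The Euclidean norm of a vector in `ℝⁿ`. -/
noncomputable def eucNorm {n : ℕ} (x : Fin n → ℝ) : ℝ :=
  ‖(WithLp.equiv 2 (Fin n → ℝ)).symm x‖

/-- The operator norm of an `n × n` real matrix induced by the Euclidean norm. -/
noncomputable def opNorm {n : ℕ} (A : Matrix (Fin n) (Fin n) ℝ) : ℝ :=
  ‖Matrix.toEuclideanCLM (𝕜 := ℝ) A‖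

/-!
Write `S = {i} ∪ N`, `u = 1_S` and `v = m e_i - 1_N` (`v = starWeight m i * starIndicator i N`).
Then `L_{i,N} = P + (m + 1) Q`, where `Q = v vᵀ / |v|²` and `P = diag u - u uᵀ / |u|² - Q` are
orthogonal idempotents (the eigenprojections of `L_{i,N}` for the eigenvalues `m + 1` and `1`), so
`exp (-T L_{i,N}) = I + (e^{-T} - 1) P + (e^{-(m+1)T} - 1) Q`. Entrywise this is
`δ_{kl} + γ_{kl} [{k, l} ⊆ S]` with `γ = starHeatCoeff` independent of `N`. Averaging over `N`
therefore only needs the probability that a uniform `m`-subset of `V \ {i}` contains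
`{k, l} \ {i}`, namely `C(m, j) / C(n - 1, j)` with `j = |{k, l} \ {i}|`.
-/

open Matrix NormedSpace

theorem IsIdempotentElem.exp_smul {𝔸 : Type*} [NormedRing 𝔸] [NormedAlgebra ℝ 𝔸]
    [CompleteSpace 𝔸] {P : 𝔸} (hP : IsIdempotentElem P) (t : ℝ) :
    exp (t • P) = 1 + (Real.exp t - 1) • P := by
  have hterm (k : ℕ) : (k.factorial⁻¹ : ℝ) • (t • P) ^ k
      = (t ^ k / k.factorial) • P + if k = 0 then 1 - P else 0 := by
    rcases k with _ | k
    · simp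
    · rw [smul_pow, hP.pow_succ_eq, smul_smul, if_neg k.succ_ne_zero, add_zero, div_eq_inv_mul]
  have hsum := ((Real.exp_eq_exp_ℝ ▸ expSeries_div_hasSum_exp t).smul_const P).add
    (hasSum_ite_eq 0 (1 - P))
  refine (exp_series_hasSum_exp' (𝕂 := ℝ) (t • P)).unique ?_
  simp_rw [hterm]
  convert hsum using 1
  module

theorem exp_smul_add_smul_of_mul_eq_zero {𝔸 : Type*} [NormedRing 𝔸] [NormedAlgebra ℝ 𝔸]
    [CompleteSpace 𝔸] {P Q : 𝔸} (hP : IsIdempotentElem P) (hQ : IsIdempotentElem Q)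
    (hPQ : P * Q = 0) (hQP : Q * P = 0) (a b : ℝ) :
    exp (a • P + b • Q) = 1 + (Real.exp a - 1) • P + (Real.exp b - 1) • Q := by
  have hcomm : Commute (a • P) (b • Q) := by
    simp only [Commute, SemiconjBy, smul_mul_smul_comm, hPQ, hQP, smul_zero]
  let _ : NormedAlgebra ℚ 𝔸 := .restrictScalars ℚ ℝ 𝔸
  rw [NormedSpace.exp_add_of_commute hcomm, hP.exp_smul, hQ.exp_smul]
  simp only [add_mul, mul_add, one_mul, mul_one, smul_mul_smul_comm, hPQ, smul_zero, add_zero]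

theorem Matrix.exp_smul_add_smul_of_mul_eq_zero {ι : Type*} [Fintype ι] [DecidableEq ι]
    {P Q : Matrix ι ι ℝ} (hP : IsIdempotentElem P) (hQ : IsIdempotentElem Q)
    (hPQ : P * Q = 0) (hQP : Q * P = 0) (a b : ℝ) :
    exp (a • P + b • Q) = 1 + (Real.exp a - 1) • P + (Real.exp b - 1) • Q := by
  let _ := Matrix.linftyOpNormedRing (n := ι) (α := ℝ)
  let _ := Matrix.linftyOpNormedAlgebra (n := ι) (R := ℝ) (α := ℝ)
  exact _root_.exp_smul_add_smul_of_mul_eq_zero hP hQ hPQ hQP a b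

namespace Matrix

variable {ι K : Type*} [Fintype ι] [DecidableEq ι] [Field K]

def rankOneProj (x : ι → K) : Matrix ι ι K := (x ⬝ᵥ x)⁻¹ • vecMulVec x x

theorem rankOneProj_mul_rankOneProj (x y : ι → K) :
    rankOneProj x * rankOneProj y
      = ((x ⬝ᵥ x)⁻¹ * (x ⬝ᵥ y) * (y ⬝ᵥ y)⁻¹) • vecMulVec x y := by
  simp only [rankOneProj, smul_mul_smul_comm, vecMulVec_mul_vecMulVec, vecMulVec_smul, smul_smul]
  ring_nf

theorem isIdempotentElem_rankOneProj {x : ι → K} (hx : x ⬝ᵥ x ≠ 0) :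
    IsIdempotentElem (rankOneProj x) := by
  rw [IsIdempotentElem, rankOneProj_mul_rankOneProj, inv_mul_cancel₀ hx, one_mul, rankOneProj]

theorem rankOneProj_mul_rankOneProj_of_dotProduct_eq_zero {x y : ι → K} (hxy : x ⬝ᵥ y = 0) :
    rankOneProj x * rankOneProj y = 0 := by
  rw [rankOneProj_mul_rankOneProj, hxy, mul_zero, zero_mul, zero_smul]

theorem diagonal_mul_rankOneProj {d x : ι → K} (h : d * x = x) :
    diagonal d * rankOneProj x = rankOneProj x := by
  have hx : diagonal d *ᵥ x = x := funext fun k => by rw [mulVec_diagonal]; exact congrFun h k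
  rw [rankOneProj, Matrix.mul_smul, mul_vecMulVec, hx]

theorem rankOneProj_mul_diagonal {d x : ι → K} (h : d * x = x) :
    rankOneProj x * diagonal d = rankOneProj x := by
  have hx : x ᵥ* diagonal d = x :=
    funext fun k => by rw [vecMul_diagonal, mul_comm]; exact congrFun h k
  rw [rankOneProj, Matrix.smul_mul, vecMulVec_mul, hx]

end Matrix

theorem Finset.card_filter_powersetCard_subset_mul_choose {α : Type*} [DecidableEq α]
    {s t : Finset α} (hts : t ⊆ s) (m : ℕ) :
    ((s.powersetCard m).filter (t ⊆ ·)).card * s.card.choose t.card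
      = s.card.choose m * m.choose t.card := by
  by_cases htm : t.card ≤ m
  · rw [card_filter_powersetCard_subset t s m hts htm, Nat.choose_mul htm, mul_comm]
  · have hempty : (s.powersetCard m).filter (t ⊆ ·) = ∅ := by
      refine filter_eq_empty_iff.mpr fun N hN htN => htm ?_
      exact (card_le_card htN).trans (mem_powersetCard.mp hN).2.le
    rw [hempty, Nat.choose_eq_zero_of_lt (not_le.mp htm), card_empty, zero_mul, mul_zero]

theorem Finset.inv_choose_mul_sum_powersetCard_ite_subset {α K : Type*} [DecidableEq α]
    [Field K] [CharZero K] {s t : Finset α} (hts : t ⊆ s) {m : ℕ} (hm : m ≤ s.card) :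
    (s.card.choose m : K)⁻¹ * ∑ N ∈ s.powersetCard m, (if t ⊆ N then 1 else 0)
      = (m.choose t.card : K) / s.card.choose t.card := by
  have hsm : (s.card.choose m : K) ≠ 0 := by exact_mod_cast (Nat.choose_pos hm).ne'
  have hst : (s.card.choose t.card : K) ≠ 0 := by
    exact_mod_cast (Nat.choose_pos (card_le_card hts)).ne'
  rw [sum_boole, inv_mul_eq_div, div_eq_div_iff hsm hst, mul_comm (m.choose t.card : K)]
  exact_mod_cast card_filter_powersetCard_subset_mul_choose hts m

noncomputable section StarLaplacian

variable {n m : ℕ} {i : Fin n} {N : Finset (Fin n)}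

def starIndicator (i : Fin n) (N : Finset (Fin n)) : Fin n → ℝ :=
  fun k => if k ∈ insert i N then 1 else 0

def starWeight (m : ℕ) (i : Fin n) : Fin n → ℝ :=
  fun k => if k = i then (m : ℝ) else -1

def starHubProj (m : ℕ) (i : Fin n) (N : Finset (Fin n)) : Matrix (Fin n) (Fin n) ℝ :=
  rankOneProj (starWeight m i * starIndicator i N)

def starLeafProj (m : ℕ) (i : Fin n) (N : Finset (Fin n)) : Matrix (Fin n) (Fin n) ℝ :=
  diagonal (starIndicator i N) - (rankOneProj (starIndicator i N) + starHubProj m i N)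

theorem starIndicator_mul_self (i : Fin n) (N : Finset (Fin n)) :
    starIndicator i N * starIndicator i N = starIndicator i N := by
  ext k
  simp only [Pi.mul_apply, starIndicator]
  split_ifs <;> norm_num

theorem sum_mul_starIndicator (hiN : i ∉ N) (f : Fin n → ℝ) :
    ∑ k, f k * starIndicator i N k = f i + ∑ k ∈ N, f k := by
  simp only [starIndicator, mul_ite, mul_one, mul_zero, Finset.sum_ite_mem, Finset.univ_inter,
    Finset.sum_insert hiN]

theorem starIndicator_dotProduct_self (hiN : i ∉ N) (hN : N.card = m) :
    starIndicator i N ⬝ᵥ starIndicator i N = (m : ℝ) + 1 := by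
  rw [dotProduct, sum_mul_starIndicator hiN]
  have : ∀ k ∈ N, starIndicator i N k = 1 := fun k hk => if_pos (Finset.mem_insert_of_mem hk)
  rw [Finset.sum_congr rfl this]
  simp only [starIndicator, Finset.mem_insert, true_or, ↓reduceIte, Finset.sum_const, hN,
    nsmul_eq_mul, mul_one, add_comm]

theorem starHub_dotProduct_starIndicator (hiN : i ∉ N) (hN : N.card = m) :
    (starWeight m i * starIndicator i N) ⬝ᵥ starIndicator i N = 0 := by
  have : ∀ k ∈ N, (starWeight m i * starIndicator i N) k = -1 := fun k hk => by
    simp [starWeight, starIndicator, hk, ne_of_mem_of_not_mem hk hiN]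
  rw [dotProduct, sum_mul_starIndicator hiN, Finset.sum_congr rfl this]
  simp [starWeight, starIndicator, hN]

theorem starHub_dotProduct_self (hiN : i ∉ N) (hN : N.card = m) :
    (starWeight m i * starIndicator i N) ⬝ᵥ (starWeight m i * starIndicator i N)
      = (m : ℝ) * (m + 1) := by
  have : ∀ k ∈ N, starWeight m i k * starIndicator i N k * starWeight m i k = 1 :=
    fun k hk => by simp [starWeight, starIndicator, hk, ne_of_mem_of_not_mem hk hiN]
  simp only [dotProduct, Pi.mul_apply, ← mul_assoc]
  rw [sum_mul_starIndicator hiN, Finset.sum_congr rfl this]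
  simp only [starWeight, ↓reduceIte, starIndicator, Finset.mem_insert, true_or, mul_one,
    Finset.sum_const, hN, nsmul_eq_mul]
  ring

theorem starIndicator_mul_starHub (m : ℕ) (i : Fin n) (N : Finset (Fin n)) :
    starIndicator i N * (starWeight m i * starIndicator i N)
      = starWeight m i * starIndicator i N := by
  rw [mul_left_comm, starIndicator_mul_self]

theorem isIdempotentElem_starHubProj (hiN : i ∉ N) (hN : N.card = m) (hm : 1 ≤ m) :
    IsIdempotentElem (starHubProj m i N) := by
  refine isIdempotentElem_rankOneProj ?_
  rw [starHub_dotProduct_self hiN hN]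
  have : (1 : ℝ) ≤ m := by exact_mod_cast hm
  positivity

theorem rankOneProj_starIndicator_mul_starHubProj (hiN : i ∉ N) (hN : N.card = m) :
    rankOneProj (starIndicator i N) * starHubProj m i N = 0 :=
  rankOneProj_mul_rankOneProj_of_dotProduct_eq_zero <| by
    rw [dotProduct_comm, starHub_dotProduct_starIndicator hiN hN]

theorem starHubProj_mul_rankOneProj_starIndicator (hiN : i ∉ N) (hN : N.card = m) :
    starHubProj m i N * rankOneProj (starIndicator i N) = 0 :=
  rankOneProj_mul_rankOneProj_of_dotProduct_eq_zero (starHub_dotProduct_starIndicator hiN hN)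

theorem isIdempotentElem_starLeafProj (hiN : i ∉ N) (hN : N.card = m) (hm : 1 ≤ m) :
    IsIdempotentElem (starLeafProj m i N) := by
  have hu : IsIdempotentElem (rankOneProj (starIndicator i N)) := by
    refine isIdempotentElem_rankOneProj ?_
    rw [starIndicator_dotProduct_self hiN hN]
    positivity
  have hD : IsIdempotentElem (diagonal (starIndicator i N)) := by
    rw [IsIdempotentElem, diagonal_mul_diagonal]
    exact congrArg diagonal (starIndicator_mul_self i N)
  refine IsIdempotentElem.sub (hu.add (isIdempotentElem_starHubProj hiN hN hm) ?_) hD ?_ ?_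
  · rw [rankOneProj_starIndicator_mul_starHubProj hiN hN,
      starHubProj_mul_rankOneProj_starIndicator hiN hN, add_zero]
  · rw [add_mul, starHubProj, rankOneProj_mul_diagonal (starIndicator_mul_self i N),
      rankOneProj_mul_diagonal (starIndicator_mul_starHub m i N)]
  · rw [mul_add, starHubProj, diagonal_mul_rankOneProj (starIndicator_mul_self i N),
      diagonal_mul_rankOneProj (starIndicator_mul_starHub m i N)]

theorem starLeafProj_mul_starHubProj (hiN : i ∉ N) (hN : N.card = m) (hm : 1 ≤ m) :
    starLeafProj m i N * starHubProj m i N = 0 := by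
  rw [starLeafProj, sub_mul, add_mul, rankOneProj_starIndicator_mul_starHubProj hiN hN,
    (isIdempotentElem_starHubProj hiN hN hm).eq, starHubProj,
    diagonal_mul_rankOneProj (starIndicator_mul_starHub m i N), zero_add, sub_self]

theorem starHubProj_mul_starLeafProj (hiN : i ∉ N) (hN : N.card = m) (hm : 1 ≤ m) :
    starHubProj m i N * starLeafProj m i N = 0 := by
  rw [starLeafProj, mul_sub, mul_add, starHubProj_mul_rankOneProj_starIndicator hiN hN,
    (isIdempotentElem_starHubProj hiN hN hm).eq, starHubProj,
    rankOneProj_mul_diagonal (starIndicator_mul_starHub m i N),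
    zero_add, sub_self]

theorem starLap_eq_starLeafProj_add (hiN : i ∉ N) (hN : N.card = m) (hm : 1 ≤ m) :
    starLap n m i N = starLeafProj m i N + ((m : ℝ) + 1) • starHubProj m i N := by
  have hm0 : (m : ℝ) ≠ 0 := by positivity
  ext k l
  simp only [starLeafProj, starHubProj, rankOneProj, starIndicator_dotProduct_self hiN hN,
    starHub_dotProduct_self hiN hN, starLap, of_apply, Matrix.add_apply, Matrix.sub_apply,
    Matrix.smul_apply, diagonal_apply, vecMulVec_apply, Pi.mul_apply, starWeight, starIndicator,
    Finset.mem_insert, smul_eq_mul]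
  by_cases hk : k = i <;> by_cases hl : l = i <;> by_cases hkN : k ∈ N <;>
    by_cases hlN : l ∈ N <;> by_cases hkl : k = l <;> simp_all <;> field_simp <;> ring

theorem exp_neg_smul_starLap (hiN : i ∉ N) (hN : N.card = m) (hm : 1 ≤ m) (T : ℝ) :
    exp (-T • starLap n m i N) = 1 + (Real.exp (-T) - 1) • starLeafProj m i N
      + (Real.exp (-((m : ℝ) + 1) * T) - 1) • starHubProj m i N := by
  rw [starLap_eq_starLeafProj_add hiN hN hm, smul_add, smul_smul, neg_mul_comm, mul_comm,
    Matrix.exp_smul_add_smul_of_mul_eq_zero (isIdempotentElem_starLeafProj hiN hN hm)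
      (isIdempotentElem_starHubProj hiN hN hm) (starLeafProj_mul_starHubProj hiN hN hm)
      (starHubProj_mul_starLeafProj hiN hN hm)]

def starHeatCoeff (m : ℕ) (i : Fin n) (T : ℝ) (k l : Fin n) : ℝ :=
  (Real.exp (-T) - 1) * ((1 : Matrix (Fin n) (Fin n) ℝ) k l - ((m : ℝ) + 1)⁻¹)
    + (Real.exp (-((m : ℝ) + 1) * T) - Real.exp (-T)) / (m * (m + 1))
      * (starWeight m i k * starWeight m i l)

theorem exp_neg_smul_starLap_apply (hiN : i ∉ N) (hN : N.card = m) (hm : 1 ≤ m) (T : ℝ)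
    (k l : Fin n) :
    exp (-T • starLap n m i N) k l = (1 : Matrix (Fin n) (Fin n) ℝ) k l
      + starHeatCoeff m i T k l * if ({k, l} : Finset (Fin n)).erase i ⊆ N then 1 else 0 := by
  have hm0 : (m : ℝ) ≠ 0 := by positivity
  have hsub :
      ({k, l} : Finset (Fin n)).erase i ⊆ N ↔ k ∈ insert i N ∧ l ∈ insert i N := by
    rw [← Finset.subset_insert_iff, Finset.insert_subset_iff, Finset.singleton_subset_iff]
  rw [exp_neg_smul_starLap hiN hN hm]
  simp only [hsub, starLeafProj, starHubProj, rankOneProj, starIndicator_dotProduct_self hiN hN,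
    starHub_dotProduct_self hiN hN, starHeatCoeff, Matrix.add_apply, Matrix.sub_apply,
    Matrix.smul_apply, diagonal_apply, vecMulVec_apply, Pi.mul_apply, starIndicator, smul_eq_mul,
    one_apply]
  split_ifs <;> simp_all <;> field_simp <;> ring

theorem Mmat_apply (hn : 3 ≤ n) (hm : 1 ≤ m) (i : Fin n) (T : ℝ) (k l : Fin n) :
    Mmat n m i T k l = (1 : Matrix (Fin n) (Fin n) ℝ) k l + starHeatCoeff m i T k l *
      ((m.choose (({k, l} : Finset (Fin n)).erase i).card : ℝ)
        / (n - 1).choose (({k, l} : Finset (Fin n)).erase i).card) := by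
  have hm0 : (m : ℝ) ≠ 0 := by positivity
  have hn1 : ((n - 1 : ℕ) : ℝ) = n - 1 := by rw [Nat.cast_sub (by omega), Nat.cast_one]
  have hn1' : (n : ℝ) - 1 ≠ 0 := by rw [← hn1]; exact_mod_cast (by omega : n - 1 ≠ 0)
  have hn2 : (n : ℝ) - 2 ≠ 0 := by
    have : (3 : ℝ) ≤ n := by exact_mod_cast hn
    linarith
  simp only [Mmat, starHeatCoeff, starWeight, of_apply, one_apply]
  by_cases hk : k = i <;> by_cases hl : l = i
  · subst hk hl
    simp only [and_self, ↓reduceIte, Finset.pair_eq_singleton, Finset.erase_singleton,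
      Finset.card_empty, Nat.choose_zero_right, Nat.cast_one, div_one]
    field_simp
    ring
  · subst hk
    have ht : ({k, l} : Finset (Fin n)).erase k = {l} :=
      Finset.erase_insert (Finset.notMem_singleton.mpr (Ne.symm hl))
    simp only [ht, Finset.card_singleton, Nat.choose_one_right, hn1, and_false, or_false,
      ↓reduceIte, hl, Ne.symm hl]
    field_simp
    ring
  · subst hl
    have ht : ({k, l} : Finset (Fin n)).erase l = {k} := by
      rw [Finset.pair_comm]
      exact Finset.erase_insert (Finset.notMem_singleton.mpr (Ne.symm hk))
    simp only [ht, Finset.card_singleton, Nat.choose_one_right, hn1, and_true, or_true,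
      ↓reduceIte, hk]
    field_simp
    ring
  · by_cases hkl : k = l
    · subst hkl
      have ht : ({k, k} : Finset (Fin n)).erase i = {k} := by
        rw [Finset.pair_eq_singleton]
        exact Finset.erase_eq_of_notMem (Finset.notMem_singleton.mpr (Ne.symm hk))
      simp only [ht, Finset.card_singleton, Nat.choose_one_right, hn1, and_self, ↓reduceIte, hk]
      field_simp
      ring
    · have ht : ({k, l} : Finset (Fin n)).erase i = {k, l} :=
        Finset.erase_eq_of_notMem (by simp [Ne.symm hk, Ne.symm hl])
      simp only [ht, Finset.card_pair hkl, Nat.cast_choose_two, hn1, sub_sub, one_add_one_eq_two,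
        and_self, or_self, ↓reduceIte, hk, hl, hkl]
      field_simp
      ring

end StarLaplacian

theorem average_exp_starLap_eq_Mmat_general (n m : ℕ) (hn : 3 ≤ n) (hm1 : 1 ≤ m) (hm2 : m ≤ n - 1)
    (i : Fin n) (T : ℝ) :
    (((n - 1).choose m : ℝ))⁻¹ •
      ∑ N ∈ Finset.powersetCard m ((Finset.univ : Finset (Fin n)).erase i),
        NormedSpace.exp (-T • starLap n m i N) = Mmat n m i T := by
  set s := (Finset.univ : Finset (Fin n)).erase i
  have hs : s.card = n - 1 := by simp [s]
  ext k l
  set t := ({k, l} : Finset (Fin n)).erase i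
  have hentry : ∀ N ∈ s.powersetCard m, exp (-T • starLap n m i N) k l
      = (1 : Matrix (Fin n) (Fin n) ℝ) k l + starHeatCoeff m i T k l * if t ⊆ N then 1 else 0 :=
    fun N hN => by
      obtain ⟨hNs, hN⟩ := Finset.mem_powersetCard.mp hN
      exact exp_neg_smul_starLap_apply (fun hi => (Finset.mem_erase.mp (hNs hi)).1 rfl) hN hm1 T
        k l
  calc _ = ((n - 1).choose m : ℝ)⁻¹ * ∑ N ∈ s.powersetCard m,
          ((1 : Matrix (Fin n) (Fin n) ℝ) k l + starHeatCoeff m i T k l *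
            if t ⊆ N then 1 else 0) := by
        rw [Matrix.smul_apply, Matrix.sum_apply, smul_eq_mul, Finset.sum_congr rfl hentry]
    _ = (1 : Matrix (Fin n) (Fin n) ℝ) k l + starHeatCoeff m i T k l *
        ((s.card.choose m : ℝ)⁻¹ * ∑ N ∈ s.powersetCard m, if t ⊆ N then 1 else 0) := by
        have : ((n - 1).choose m : ℝ) ≠ 0 := by exact_mod_cast (Nat.choose_pos hm2).ne'
        rw [Finset.sum_add_distrib, Finset.sum_const, Finset.card_powersetCard, hs, nsmul_eq_mul,
          ← Finset.mul_sum]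
        field_simp
    _ = Mmat n m i T k l := by
        rw [Finset.inv_choose_mul_sum_powersetCard_ite_subset
          (Finset.erase_subset_erase i (Finset.subset_univ _)) (hs ▸ hm2), hs, Mmat_apply hn hm1]

/-- The average of `exp(-T L_{i,N})` over all `m`-element subsets `N` of
`V \ {i}` equals `M_i(T)`. -/
theorem average_exp_starLap_eq_Mmat (n m : ℕ) (hn : 3 ≤ n) (hm1 : 1 ≤ m) (hm2 : m ≤ n - 1)
    (i : Fin n) (T : ℝ) (hT : 0 < T) :
    (((n - 1).choose m : ℝ))⁻¹ •
      ∑ N ∈ Finset.powersetCard m ((Finset.univ : Finset (Fin n)).erase i),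
        NormedSpace.exp (-T • starLap n m i N) = Mmat n m i T :=
  average_exp_starLap_eq_Mmat_general n m hn hm1 hm2 i T
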